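/- arXiv:2512.02045 — 2 statements merged into one kernel-verified Lean document; each statement's English description precedes it below -/
import Mathlib

section
/- Freiling's axiom of symmetry — for every function f from the reals to countable sets of reals, there exist reals x and y with y ∉ f(x) and x ∉ f(y) — holds if and only if the Continuum Hypothesis fails. -/
open Cardinal

universe u

/-- The statement of CH is universe-invariant. -/
lemma ch_univ_iff :
    ((2 : Cardinal.{u}) ^ aleph0 = aleph 1) ↔ ((2 : Cardinal.{0}) ^ aleph0 = aleph 1) := by
  have l1 : Cardinal.lift.{u} ((2 : Cardinal.{0}) ^ aleph0) = (2 : Cardinal.{u}) ^ aleph0 := by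
    rw [Cardinal.lift_two_power, Cardinal.lift_aleph0]
  have l2 : Cardinal.lift.{u} (aleph 1) = aleph 1 := by
    rw [Cardinal.lift_aleph, Ordinal.lift_one]
  constructor
  · intro h
    exact Cardinal.lift_injective (by rw [l1, l2, h])
  · intro h
    rw [← l1, ← l2, h]

/-- Freiling's axiom of symmetry holds iff the Continuum Hypothesis fails. -/
theorem freiling_axiom_of_symmetry_iff_not_CH :
    (∀ f : ℝ → Set ℝ, (∀ x, (f x).Countable) →
      ∃ x y : ℝ, y ∉ f x ∧ x ∉ f y) ↔
    ¬ ((2 : Cardinal) ^ aleph0 = aleph 1) := by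
  rw [ch_univ_iff]
  constructor
  · -- AX → ¬CH
    intro hAX hCH
    -- build a well-order of ℝ of type ω₁
    have hmk : #ℝ = #((aleph 1).ord.ToType) := by
      rw [Cardinal.mk_real, Cardinal.mk_ord_toType, ← Cardinal.two_power_aleph0]
      exact hCH
    obtain ⟨e⟩ := Cardinal.eq.mp hmk
    set f : ℝ → Set ℝ := fun x => e.symm '' {z | z ≤ e x} with hf
    have hcount : ∀ x, (f x).Countable := by
      intro x
      apply Set.Countable.image
      have h1 : {z | z ≤ e x} = insert (e x) (Set.Iio (e x)) := by
        ext z; simp [le_iff_lt_or_eq, or_comm]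
      rw [h1]
      apply Set.Countable.insert
      exact (Cardinal.countable_iff_lt_aleph_one _).mpr (Cardinal.mk_Iio_ord_toType (e x))
    obtain ⟨x, y, hyx, hxy⟩ := hAX f hcount
    rcases le_total (e x) (e y) with h | h
    · exact hxy ⟨e x, h, e.symm_apply_apply x⟩
    · exact hyx ⟨e y, h, e.symm_apply_apply y⟩
  · -- ¬CH → AX
    intro hCH f hcount
    by_contra hno
    push_neg at hno
    have hall : ∀ x y : ℝ, y ∈ f x ∨ x ∈ f y := by
      intro x y
      by_cases h : y ∈ f x
      · exact Or.inl h
      · exact Or.inr (hno x y h)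
    have hlt : aleph 1 < #ℝ := by
      rw [Cardinal.mk_real]
      refine lt_of_le_of_ne Cardinal.aleph_one_le_continuum (fun h => hCH ?_)
      rw [Cardinal.two_power_aleph0]
      exact h.symm
    obtain ⟨A, hA⟩ := Cardinal.le_mk_iff_exists_set.mp hlt.le
    -- B = union of f over A
    set B : Set ℝ := ⋃ x : A, f x with hB
    have hBcard : #B < #ℝ := by
      calc #B ≤ #A * aleph0 := by
              refine (Cardinal.mk_iUnion_le _).trans ?_
              gcongr
              apply ciSup_le'
              intro i
              rw [Cardinal.mk_le_aleph0_iff, Set.countable_coe_iff]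
              exact hcount i
        _ = aleph 1 * aleph0 := by rw [hA]
        _ = aleph 1 := Cardinal.mul_eq_left (Cardinal.aleph0_le_aleph 1)
              (Cardinal.aleph0_le_aleph 1) Cardinal.aleph0_ne_zero
        _ < #ℝ := hlt
    have hBne : B ≠ Set.univ := by
      intro h
      rw [h, Cardinal.mk_univ] at hBcard
      exact lt_irrefl _ hBcard
    obtain ⟨y, hy⟩ : ∃ y : ℝ, y ∉ B := by
      by_contra h
      push_neg at h
      exact hBne (Set.eq_univ_of_forall h)
    -- every x ∈ A lies in f y
    have hAsub : A ⊆ f y := by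
      intro x hx
      rcases hall x y with h | h
      · exact absurd (Set.mem_iUnion.mpr ⟨⟨x, hx⟩, h⟩) hy
      · exact h
    have : aleph 1 ≤ aleph0 := by
      calc aleph 1 = #A := hA.symm
        _ ≤ #(f y) := Cardinal.mk_le_mk_of_subset hAsub
        _ ≤ aleph0 := by
              rw [Cardinal.mk_le_aleph0_iff, Set.countable_coe_iff]
              exact hcount y
    exact absurd this (not_le.mpr (Cardinal.aleph0_lt_aleph_one))
end

section
/- If the continuum has cardinality greater than ℵ₁, then for every function f from ℝ to countable subsets of ℝ there exist x, y with y ∉ f(x) and x ∉ f(y). -/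
open Cardinal

/-- If the continuum is bigger than ℵ₁ then Freiling's axiom of symmetry holds. -/
theorem axiom_of_symmetry_of_aleph_one_lt_continuum
    (h : aleph 1 < Cardinal.mk ℝ) :
    ∀ f : ℝ → Set ℝ, (∀ x, (f x).Countable) →
      ∃ x y : ℝ, y ∉ f x ∧ x ∉ f y := by
  intro f hf
  obtain ⟨S, hS⟩ := Cardinal.le_mk_iff_exists_set.1 h.le
  have hU : Cardinal.mk (⋃ a ∈ S, f a) < Cardinal.mk ℝ := by
    refine lt_of_le_of_lt (Cardinal.mk_biUnion_le _ _) ?_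
    calc Cardinal.mk S * ⨆ a : S, Cardinal.mk (f a)
        ≤ aleph 1 * ℵ₀ := by
          have : Nonempty S := by
            rw [← Cardinal.mk_ne_zero_iff, hS]
            exact (Cardinal.aleph0_pos.trans Cardinal.aleph0_lt_aleph_one).ne'
          exact mul_le_mul' hS.le (ciSup_le fun a => (hf a).le_aleph0)
      _ = aleph 1 := by
          exact Cardinal.mul_eq_left (Cardinal.aleph0_le_aleph 1)
            (Cardinal.aleph0_le_aleph 1) Cardinal.aleph0_ne_zero
      _ < Cardinal.mk ℝ := h
  have : ¬ (⋃ a ∈ S, f a) = Set.univ := by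
    intro he
    rw [he] at hU
    simp at hU
  obtain ⟨y, hy⟩ := Set.ne_univ_iff_exists_notMem _ |>.1 this
  have hfy : Cardinal.mk (f y) < Cardinal.mk S := by
    rw [hS]
    exact lt_of_le_of_lt (hf y).le_aleph0 (Cardinal.aleph0_lt_aleph_one)
  have : ¬ S ⊆ f y := by
    intro hsub
    exact absurd (Cardinal.mk_le_mk_of_subset hsub) hfy.not_ge
  obtain ⟨x, hxS, hxfy⟩ := Set.not_subset.1 this
  exact ⟨x, y, fun hyx => hy (Set.mem_biUnion hxS hyx), hxfy⟩
end
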